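/- arXiv:quant-ph/0209131 — 3 statements merged into one kernel-verified Lean document; each statement's English description precedes it below -/
import Mathlib

section
/- (Hitting time lemma) Let H be the reduced Hamiltonian on the 2n-dimensional column subspace for the graph G_{n-1}' (tridiagonal with entries 1 except a √2 entry between positions n and n+1), assume H has 2n distinct eigenvalues with minimum gap ΔE, and let ε > 0. If τ ≥ 4n/(ε ΔE), then (1/τ) ∫_0^τ |⟨col 2n| e^{-iHt} |col 1⟩|² dt ≥ (1/(2n))(1 − ε). -/
/-!
Diagonalise `H = ∑ₖ Eₖ vₖ vₖ*`. The reflection `j ↦ 2n+1-j` is a unitary commuting with `H`;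
since the spectrum is simple it maps each `vₖ` to a unimodular multiple of itself, so
`|vₖ(2n)| = |vₖ(1)|`. Hence the exit amplitude is `∑ₖ aₖ e^{-iEₖt}` with `|aₖ| = |vₖ(1)|²`, and
these weights sum to `1`. In the time average of its squared modulus the diagonal terms give
`∑ₖ |aₖ|² ≥ 1/(2n)` (Cauchy–Schwarz), while each cross term is an oscillatory integral of modulus
at most `2 |aₖ| |aₗ| / (τ ΔE)`; together they cost at most `2/(τ ΔE) ≤ ε/(2n)`.
-/

open Complex Finset ComplexConjugate Matrix

lemma norm_integral_exp_mul_I_le (ω τ : ℝ) (hω : ω ≠ 0) :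
    ‖∫ t in (0 : ℝ)..τ, cexp (ω * I * t)‖ ≤ 2 / |ω| := by
  have hc : (ω : ℂ) * I ≠ 0 := mul_ne_zero (ofReal_ne_zero.mpr hω) I_ne_zero
  have hexp : ‖cexp (ω * I * τ)‖ = 1 := by rw [norm_exp]; simp
  rw [integral_exp_mul_complex hc, norm_div, norm_mul, norm_I, mul_one, norm_real,
    Real.norm_eq_abs, ofReal_zero, mul_zero, Complex.exp_zero]
  gcongr
  calc ‖cexp (ω * I * τ) - 1‖ ≤ ‖cexp (ω * I * τ)‖ + ‖(1 : ℂ)‖ := norm_sub_le _ _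
    _ = 2 := by rw [hexp, norm_one]; norm_num

section TrigonometricPolynomial

variable {ι : Type*} [Fintype ι]

lemma norm_sum_mul_exp_sq (a : ι → ℂ) (E : ι → ℝ) (t : ℝ) :
    ((‖∑ k, a k * cexp (-(I * t) * E k)‖ ^ 2 : ℝ) : ℂ) =
      ∑ k, ∑ l, a k * conj (a l) * cexp (↑(E l - E k) * I * t) := by
  rw [ofReal_pow, ← mul_conj', map_sum, sum_mul_sum]
  refine sum_congr rfl fun k _ => sum_congr rfl fun l _ => ?_
  rw [map_mul, ← exp_conj, mul_mul_mul_comm, ← Complex.exp_add]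
  congr 2
  simp only [map_mul, map_neg, conj_I, conj_ofReal, ofReal_sub]
  ring

lemma integral_norm_sum_mul_exp_sq (a : ι → ℂ) (E : ι → ℝ) (τ : ℝ) :
    ∫ t in (0 : ℝ)..τ, ‖∑ k, a k * cexp (-(I * t) * E k)‖ ^ 2 =
      (∑ k, ∑ l, a k * conj (a l) * ∫ t in (0 : ℝ)..τ, cexp (↑(E l - E k) * I * t)).re := by
  rw [← ofReal_re (∫ t in (0 : ℝ)..τ, _), ← intervalIntegral.integral_ofReal]
  congr 1
  simp_rw [norm_sum_mul_exp_sq]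
  rw [intervalIntegral.integral_finsetSum fun k _ =>
    (by fun_prop : Continuous _).intervalIntegrable _ _]
  refine sum_congr rfl fun k _ => ?_
  rw [intervalIntegral.integral_finsetSum fun l _ =>
    (by fun_prop : Continuous _).intervalIntegrable _ _]
  exact sum_congr rfl fun l _ => intervalIntegral.integral_const_mul _ _

lemma integral_norm_sum_mul_exp_sq_ge (a : ι → ℂ) (E : ι → ℝ) {ΔE : ℝ} (hΔ : 0 < ΔE)
    (hgap : Pairwise fun k l => ΔE ≤ |E k - E l|) (τ : ℝ) :
    τ * ∑ k, ‖a k‖ ^ 2 - 2 / ΔE * (∑ k, ‖a k‖) ^ 2 ≤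
      ∫ t in (0 : ℝ)..τ, ‖∑ k, a k * cexp (-(I * t) * E k)‖ ^ 2 := by
  classical
  set J : ι → ι → ℂ := fun k l => ∫ t in (0 : ℝ)..τ, cexp (↑(E l - E k) * I * t)
  have hJ_off : ∀ k l, k ≠ l → ‖J k l‖ ≤ 2 / ΔE := by
    intro k l hkl
    have hgap' : ΔE ≤ |E l - E k| := abs_sub_comm (E k) (E l) ▸ hgap hkl
    have hω : E l - E k ≠ 0 := fun h => by rw [h, abs_zero] at hgap'; linarith
    exact (norm_integral_exp_mul_I_le _ τ hω).trans
      (div_le_div_of_nonneg_left zero_le_two hΔ hgap')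
  have hterm : ∀ k l, (if k = l then τ * ‖a k‖ ^ 2 else 0) - 2 / ΔE * (‖a k‖ * ‖a l‖) ≤
      (a k * conj (a l) * J k l).re := by
    intro k l
    split_ifs with hkl
    · subst hkl
      have hJ : J k k = τ := by simp [J]
      rw [mul_conj', hJ, ← ofReal_pow, ← ofReal_mul, ofReal_re]
      have : 0 ≤ 2 / ΔE * (‖a k‖ * ‖a k‖) := by positivity
      linarith
    · calc 0 - 2 / ΔE * (‖a k‖ * ‖a l‖) ≤ -(‖a k‖ * ‖a l‖ * ‖J k l‖) := by
            nlinarith [hJ_off k l hkl, mul_nonneg (norm_nonneg (a k)) (norm_nonneg (a l))]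
        _ = -‖a k * conj (a l) * J k l‖ := by rw [norm_mul, norm_mul, RCLike.norm_conj]
        _ ≤ _ := neg_le_of_abs_le (abs_re_le_norm _)
  calc τ * ∑ k, ‖a k‖ ^ 2 - 2 / ΔE * (∑ k, ‖a k‖) ^ 2
      = ∑ k, ∑ l, ((if k = l then τ * ‖a k‖ ^ 2 else 0) - 2 / ΔE * (‖a k‖ * ‖a l‖)) := by
        simp only [sum_sub_distrib, sum_ite_eq, mem_univ, if_true, ← mul_sum, sum_mul_sum, sq]
    _ ≤ ∑ k, ∑ l, (a k * conj (a l) * J k l).re :=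
        sum_le_sum fun k _ => sum_le_sum fun l _ => hterm k l
    _ = _ := by rw [integral_norm_sum_mul_exp_sq, re_sum]; simp only [re_sum, J]

lemma le_time_average_norm_sum_mul_exp_sq [Nonempty ι] (a : ι → ℂ) (E : ι → ℝ) {ΔE : ℝ}
    (hΔ : 0 < ΔE) (hgap : Pairwise fun k l => ΔE ≤ |E k - E l|) (ha : ∑ k, ‖a k‖ = 1)
    {ε τ : ℝ} (hε : 0 < ε) (hτ : 2 * Fintype.card ι / (ε * ΔE) ≤ τ) :
    1 / Fintype.card ι * (1 - ε) ≤
      1 / τ * ∫ t in (0 : ℝ)..τ, ‖∑ k, a k * cexp (-(I * t) * E k)‖ ^ 2 := by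
  set N : ℝ := (Fintype.card ι : ℝ)
  have hN : 0 < N := Nat.cast_pos.mpr Fintype.card_pos
  have hτ_pos : 0 < τ := lt_of_lt_of_le (by positivity) hτ
  have hτ' : 2 * N ≤ τ * (ε * ΔE) := (div_le_iff₀ (by positivity)).mp hτ
  have hdiag : 1 / N ≤ ∑ k, ‖a k‖ ^ 2 := by
    have := sq_sum_le_card_mul_sum_sq (s := univ) (f := fun k => ‖a k‖)
    rw [ha, card_univ] at this
    rw [div_le_iff₀ hN]; linarith
  have hcross : 2 / (τ * ΔE) ≤ ε / N := by
    rw [div_le_div_iff₀ (by positivity) hN]; linarith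
  calc 1 / N * (1 - ε) = 1 / N - ε / N := by ring
    _ ≤ ∑ k, ‖a k‖ ^ 2 - 2 / (τ * ΔE) := sub_le_sub hdiag hcross
    _ = 1 / τ * (τ * ∑ k, ‖a k‖ ^ 2 - 2 / ΔE * (∑ k, ‖a k‖) ^ 2) := by
        rw [ha]; field_simp
    _ ≤ _ := by
        gcongr
        exact integral_norm_sum_mul_exp_sq_ge a E hΔ hgap τ

end TrigonometricPolynomial

namespace LinearMap.IsSymmetric

variable {𝕜 E ι : Type*} [RCLike 𝕜] [NormedAddCommGroup E] [InnerProductSpace 𝕜 E] [Fintype ι]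
  {T : E →ₗ[𝕜] E} {b : OrthonormalBasis ι 𝕜 E} {μ : ι → ℝ}

lemma eq_inner_smul_of_apply_eq_smul (hT : T.IsSymmetric)
    (hb : ∀ i, T (b i) = (μ i : 𝕜) • b i) (hμ : Function.Injective μ) {k : ι} {w : E}
    (hw : T w = (μ k : 𝕜) • w) : w = inner 𝕜 (b k) w • b k := by
  conv_lhs => rw [← b.sum_repr' w]
  refine sum_eq_single k (fun l _ hlk => ?_) (by simp)
  suffices inner 𝕜 (b l) w = 0 by rw [this, zero_smul]
  have h : (μ l : 𝕜) * inner 𝕜 (b l) w = (μ k : 𝕜) * inner 𝕜 (b l) w := by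
    rw [← RCLike.conj_ofReal, ← inner_smul_left, ← hb, hT, hw, inner_smul_right]
  have hne : (μ l : 𝕜) - μ k ≠ 0 :=
    sub_ne_zero.mpr fun h => hlk (hμ (RCLike.ofReal_injective h))
  exact (mul_eq_zero.mp (by rw [sub_mul, h, sub_self])).resolve_left hne

lemma exists_norm_eq_one_apply_eq_smul (hT : T.IsSymmetric)
    (hb : ∀ i, T (b i) = (μ i : 𝕜) • b i) (hμ : Function.Injective μ) (R : E →ₗᵢ[𝕜] E)
    (hR : ∀ x, T (R x) = R (T x)) (k : ι) : ∃ c : 𝕜, ‖c‖ = 1 ∧ R (b k) = c • b k := by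
  have hRb : R (b k) = inner 𝕜 (b k) (R (b k)) • b k :=
    hT.eq_inner_smul_of_apply_eq_smul hb hμ (by rw [hR, hb, map_smul])
  refine ⟨_, ?_, hRb⟩
  have := congrArg norm hRb
  rwa [R.norm_map, b.orthonormal.1 k, norm_smul, b.orthonormal.1 k, mul_one, eq_comm] at this

end LinearMap.IsSymmetric

lemma OrthonormalBasis.sum_sq_norm_apply {𝕜 ι n : Type*} [RCLike 𝕜] [Fintype ι] [Fintype n]
    [DecidableEq n] (b : OrthonormalBasis ι 𝕜 (EuclideanSpace 𝕜 n)) (i : n) :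
    ∑ k, ‖b k i‖ ^ 2 = 1 := by
  simpa [EuclideanSpace.inner_single_left] using
    b.sum_sq_norm_inner_left (EuclideanSpace.single i 1)

namespace Matrix.IsHermitian

variable {n : Type*} [Fintype n] [DecidableEq n]

lemma injective_eigenvalues_of_ncard_spectrum {𝕜 : Type*} [RCLike 𝕜] {A : Matrix n n 𝕜}
    (hA : A.IsHermitian) (h : (spectrum 𝕜 A).ncard = Fintype.card n) :
    Function.Injective hA.eigenvalues := by
  rw [hA.spectrum_eq_image_range, ← Set.range_comp, ← Set.image_univ, ← Nat.card_eq_fintype_card,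
    ← Set.ncard_univ, Set.ncard_image_iff, Set.injOn_univ] at h
  exact h.of_comp

lemma pairwise_le_abs_eigenvalues_sub {A : Matrix n n ℂ} (hA : A.IsHermitian)
    (hinj : Function.Injective hA.eigenvalues) {δ : ℝ}
    (hgap : ∀ x ∈ spectrum ℂ A, ∀ y ∈ spectrum ℂ A, x ≠ y → δ ≤ ‖x - y‖) :
    Pairwise fun k l => δ ≤ |hA.eigenvalues k - hA.eigenvalues l| := by
  intro k l hkl
  have hmem : ∀ k, (hA.eigenvalues k : ℂ) ∈ spectrum ℂ A := fun k => by
    rw [hA.spectrum_eq_image_range]; exact ⟨_, ⟨k, rfl⟩, rfl⟩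
  have := hgap _ (hmem k) _ (hmem l) (by exact_mod_cast hinj.ne hkl)
  rwa [← ofReal_sub, norm_real, Real.norm_eq_abs] at this

lemma norm_eigenvectorBasis_apply_perm {𝕜 : Type*} [RCLike 𝕜] {A : Matrix n n 𝕜}
    (hA : A.IsHermitian) (hinj : Function.Injective hA.eigenvalues) (σ : Equiv.Perm n)
    (hσ : ∀ i j, A (σ i) (σ j) = A i j) (k i : n) :
    ‖hA.eigenvectorBasis k (σ i)‖ = ‖hA.eigenvectorBasis k i‖ := by
  set R := (LinearIsometryEquiv.piLpCongrLeft 2 𝕜 𝕜 σ.symm).toLinearIsometry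
  have hR_apply : ∀ (v : EuclideanSpace 𝕜 n) j, R v j = v (σ j) := fun v j => rfl
  have hR : ∀ x, toEuclideanLin A (R x) = R (toEuclideanLin A x) := by
    intro x
    ext j
    change ∑ l, A j l * R x l = ∑ l, A (σ j) l * x l
    conv_rhs => rw [← Equiv.sum_comp σ]
    simp only [hR_apply, hσ]
  have hb : ∀ i, toEuclideanLin A (hA.eigenvectorBasis i) =
      (hA.eigenvalues i : 𝕜) • hA.eigenvectorBasis i := by
    intro i
    ext j
    rw [toLpLin_apply, PiLp.toLp_apply, hA.mulVec_eigenvectorBasis, Pi.smul_apply,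
      PiLp.smul_apply, RCLike.real_smul_eq_coe_smul (K := 𝕜)]
  obtain ⟨c, hc, hRb⟩ := (isSymmetric_toEuclideanLin_iff.mpr hA).exists_norm_eq_one_apply_eq_smul
    hb hinj R hR k
  have := congrArg (fun v : EuclideanSpace 𝕜 n => ‖v i‖) hRb
  rwa [hR_apply, PiLp.smul_apply, smul_eq_mul, norm_mul, hc, one_mul] at this

lemma exp_smul_apply {A : Matrix n n ℂ} (hA : A.IsHermitian) (c : ℂ) (i j : n) :
    NormedSpace.exp (c • A) i j = ∑ k, hA.eigenvectorBasis k i *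
      cexp (c * hA.eigenvalues k) * conj (hA.eigenvectorBasis k j) := by
  set U := Unitary.toUnits hA.eigenvectorUnitary
  have hdiag : c • A = (U : Matrix n n ℂ) * diagonal (fun k => c * hA.eigenvalues k) * (↑U⁻¹ : Matrix n n ℂ) := by
    conv_lhs => rw [hA.spectral_theorem]
    rw [Unitary.conjStarAlgAut_apply, ← smul_mul_assoc, ← mul_smul_comm, ← diagonal_smul]
    rfl
  rw [hdiag, Matrix.exp_units_conj, Matrix.exp_diagonal, Pi.exp_def, ← Complex.exp_eq_exp_ℂ,
    mul_apply]
  simp [mul_diagonal, star_apply, U]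

lemma exists_sum_norm_eq_one_and_exp_apply_perm {A : Matrix n n ℂ} (hA : A.IsHermitian)
    (hinj : Function.Injective hA.eigenvalues) (σ : Equiv.Perm n)
    (hσ : ∀ i j, A (σ i) (σ j) = A i j) (i : n) :
    ∃ a : n → ℂ, ∑ k, ‖a k‖ = 1 ∧ ∀ t : ℝ,
      NormedSpace.exp ((-(I * t)) • A) (σ i) i = ∑ k, a k * cexp (-(I * t) * hA.eigenvalues k) := by
  set v := hA.eigenvectorBasis
  refine ⟨fun k => v k (σ i) * conj (v k i), ?_, fun t => ?_⟩
  · rw [← v.sum_sq_norm_apply i]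
    refine sum_congr rfl fun k _ => ?_
    rw [norm_mul, RCLike.norm_conj, hA.norm_eigenvectorBasis_apply_perm hinj σ hσ, sq]
  · rw [hA.exp_smul_apply]
    exact sum_congr rfl fun k _ => by ring

end Matrix.IsHermitian

noncomputable def columnHamiltonian (n : ℕ) : Matrix (Fin (2 * n)) (Fin (2 * n)) ℂ :=
  Matrix.of fun j k =>
    if j.val + 1 = k.val ∨ k.val + 1 = j.val then
      (if min j.val k.val = n - 1 then (Real.sqrt 2 : ℂ) else 1) else 0

lemma isHermitian_columnHamiltonian (n : ℕ) : (columnHamiltonian n).IsHermitian := by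
  ext j k
  simp only [conjTranspose_apply, columnHamiltonian, of_apply, or_comm, min_comm]
  split_ifs <;> simp

-- Sites `1, …, 2n` are the indices `0, …, 2n-1`, so the reflection `j ↦ 2n+1-j` is `Fin.rev`.
lemma columnHamiltonian_rev (n : ℕ) (i j : Fin (2 * n)) :
    columnHamiltonian n i.rev j.rev = columnHamiltonian n i j := by
  simp only [columnHamiltonian, of_apply, Fin.val_rev]
  have := i.isLt; have := j.isLt
  split_ifs <;> first | rfl | omega

/-- Hitting time lemma: for the reduced glued-trees Hamiltonian `H` on the
`2n`-dimensional column subspace (tridiagonal with entries `1` except a `√2` entry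
between sites `n` and `n+1`), if `H` has `2n` distinct eigenvalues with minimum gap
`ΔE` and `τ ≥ 4n/(ε ΔE)`, then the time-averaged probability of finding the exit
satisfies `(1/τ) ∫₀^τ |⟨col 2n| e^{-iHt} |col 1⟩|² dt ≥ (1/(2n))(1 − ε)`. -/
theorem hitting_time_lemma (n : ℕ) (hn : 0 < n)
    (H : Matrix (Fin (2 * n)) (Fin (2 * n)) ℂ)
    (hH : ∀ j k : Fin (2 * n), H j k =
      if j.val + 1 = k.val ∨ k.val + 1 = j.val then
        (if min j.val k.val = n - 1 then (Real.sqrt 2 : ℂ) else 1) else 0)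
    (ΔE : ℝ) (hΔ : 0 < ΔE)
    (hcard : (spectrum ℂ H).ncard = 2 * n)
    (hgap : ∀ x ∈ spectrum ℂ H, ∀ y ∈ spectrum ℂ H, x ≠ y → ΔE ≤ ‖x - y‖)
    (ε : ℝ) (hε : 0 < ε)
    (τ : ℝ) (hτ : 4 * n / (ε * ΔE) ≤ τ) :
    (1 / (2 * (n : ℝ))) * (1 - ε)
      ≤ (1 / τ) * ∫ t in (0 : ℝ)..τ,
          (‖(NormedSpace.exp ((-(Complex.I * (t : ℂ))) • H))
            ⟨2 * n - 1, by omega⟩ ⟨0, by omega⟩‖) ^ 2 := by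
  obtain rfl : H = columnHamiltonian n := Matrix.ext hH
  have hHerm := isHermitian_columnHamiltonian n
  have hinj := hHerm.injective_eigenvalues_of_ncard_spectrum (by simpa using hcard)
  set e₀ : Fin (2 * n) := ⟨0, by omega⟩
  have hrev₀ : Fin.revPerm e₀ = ⟨2 * n - 1, by omega⟩ := Fin.ext (by simp [e₀, Fin.val_rev])
  obtain ⟨a, ha, hamp⟩ := hHerm.exists_sum_norm_eq_one_and_exp_apply_perm hinj Fin.revPerm
    (columnHamiltonian_rev n) e₀
  have hcard_fin : (Fintype.card (Fin (2 * n)) : ℝ) = 2 * n := by simp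
  have hτ' : 2 * (Fintype.card (Fin (2 * n)) : ℝ) / (ε * ΔE) ≤ τ := by
    rwa [hcard_fin, ← mul_assoc, show (2 : ℝ) * 2 = 4 by norm_num]
  have : Nonempty (Fin (2 * n)) := ⟨e₀⟩
  have key := le_time_average_norm_sum_mul_exp_sq a _ hΔ
    (hHerm.pairwise_le_abs_eigenvalues_sub hinj hgap) ha hε hτ'
  rw [hcard_fin] at key
  simp_rw [← hrev₀, hamp]
  exact key
end

section
/- Every eigenvector of the reduced Hamiltonian H on ℂ^{2n} (tridiagonal, entries 1 except √2 between sites n and n+1) that is of the form ψ_j = sin(pj) for 1 ≤ j ≤ n and ψ_j = ± sin(p(2n+1−j)) for n+1 ≤ j ≤ 2n, with p ∈ (0,π), has eigenvalue 2cos p, and the eigenvalue equation at sites n and n+1 holds if and only if sin((n+1)p)/sin(np) = ±√2 (with matching sign, assuming sin(np) ≠ 0). -/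
/-!
Both halves of the ansatz are restrictions of `k ↦ sin (p k)`, which satisfies the free
recurrence `u (k-1) + u (k+1) = 2 cos p · u k` by the sum-to-product formula; the second half
is read with `k = 2n+1-j`, so its boundary value at `j = 2n+1` vanishes. At the junction the
recurrence turns the equation at site `n` into `sin ((n+1) p) = s √2 sin (n p)`, and the
equation at site `n+1`, multiplied by `s` (with `s² = 1`), into the same identity.
-/

open Real

lemma sin_mul_pred_add_sin_mul_succ (p : ℝ) {k : ℕ} (hk : 1 ≤ k) :
    sin (p * ↑(k - 1)) + sin (p * ↑(k + 1)) = 2 * cos p * sin (p * k) := by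
  rw [Nat.cast_sub hk, Nat.cast_add, Nat.cast_one, mul_sub, mul_add, mul_one,
    ← two_mul_sin_mul_cos]
  ring

noncomputable def reflectedSine (n : ℕ) (p s : ℝ) (j : ℕ) : ℝ :=
  if j ≤ n then sin (p * j) else s * sin (p * ↑(2 * n + 1 - j))

namespace reflectedSine

variable {n j : ℕ} {p s : ℝ}

lemma of_le (h : j ≤ n) : reflectedSine n p s j = sin (p * j) := if_pos h

lemma of_lt (h : n < j) : reflectedSine n p s j = s * sin (p * ↑(2 * n + 1 - j)) :=
  if_neg h.not_ge

lemma recurrence (h₁ : 1 ≤ j) (h₂ : j ≤ 2 * n) (hn₀ : j ≠ n) (hn₁ : j ≠ n + 1) :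
    reflectedSine n p s (j - 1) + reflectedSine n p s (j + 1) =
      2 * cos p * reflectedSine n p s j := by
  rcases lt_or_gt_of_ne hn₀ with hlt | hgt
  · rw [of_le (by omega), of_le (by omega), of_le hlt.le]
    exact sin_mul_pred_add_sin_mul_succ p h₁
  · have hk : 1 ≤ 2 * n + 1 - j := by omega
    rw [of_lt (by omega), of_lt (by omega), of_lt hgt,
      show 2 * n + 1 - (j - 1) = 2 * n + 1 - j + 1 by omega,
      show 2 * n + 1 - (j + 1) = 2 * n + 1 - j - 1 by omega]
    linear_combination s * sin_mul_pred_add_sin_mul_succ p hk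

lemma eigen_eq_left_iff (hn : 1 ≤ n) :
    reflectedSine n p s (n - 1) + √2 * reflectedSine n p s (n + 1) =
        2 * cos p * reflectedSine n p s n ↔
      sin ((n + 1) * p) = s * √2 * sin (n * p) := by
  have hrec := sin_mul_pred_add_sin_mul_succ p hn
  rw [of_le (by omega), of_lt (by omega), of_le le_rfl,
    show 2 * n + 1 - (n + 1) = n by omega, ← hrec, mul_comm (n : ℝ) p,
    show ((n : ℝ) + 1) * p = p * ↑(n + 1) by push_cast; ring]
  constructor <;> intro h <;> linear_combination -h

lemma eigen_eq_right_iff (hn : 1 ≤ n) (hs : s * s = 1) :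
    √2 * reflectedSine n p s n + reflectedSine n p s (n + 2) =
        2 * cos p * reflectedSine n p s (n + 1) ↔
      sin ((n + 1) * p) = s * √2 * sin (n * p) := by
  have hrec := sin_mul_pred_add_sin_mul_succ p hn
  rw [of_le le_rfl, of_lt (by omega), of_lt (by omega),
    show 2 * n + 1 - (n + 2) = n - 1 by omega, show 2 * n + 1 - (n + 1) = n by omega,
    mul_comm (n : ℝ) p, show ((n : ℝ) + 1) * p = p * ↑(n + 1) by push_cast; ring]
  constructor
  · intro h
    linear_combination hrec - s * h + (sin (p * ↑(n - 1)) - 2 * cos p * sin (p * n)) * hs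
  · intro h
    linear_combination s * hrec - s * h - √2 * sin (p * n) * hs

end reflectedSine

theorem reduced_hamiltonian_eigenstates_general (n : ℕ) (hn : 1 ≤ n) (p : ℝ)
    (s : ℝ) (hs : s = 1 ∨ s = -1)
    (hsin : Real.sin ((n : ℝ) * p) ≠ 0)
    (ψ : ℕ → ℝ)
    (hψ : ∀ j, ψ j = if j ≤ n then Real.sin (p * j)
      else s * Real.sin (p * ((2 * n + 1 - j : ℕ) : ℝ))) :
    (∀ j, 1 ≤ j → j ≤ 2 * n → j ≠ n → j ≠ n + 1 →
        ψ (j - 1) + ψ (j + 1) = 2 * Real.cos p * ψ j)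
    ∧ ((ψ (n - 1) + Real.sqrt 2 * ψ (n + 1) = 2 * Real.cos p * ψ n
          ∧ Real.sqrt 2 * ψ n + ψ (n + 2) = 2 * Real.cos p * ψ (n + 1))
        ↔ Real.sin (((n : ℝ) + 1) * p) / Real.sin ((n : ℝ) * p) = s * Real.sqrt 2) := by
  obtain rfl : ψ = reflectedSine n p s := funext hψ
  have hs2 : s * s = 1 := by rcases hs with rfl | rfl <;> norm_num
  refine ⟨fun j h₁ h₂ hn₀ hn₁ => reflectedSine.recurrence h₁ h₂ hn₀ hn₁, ?_⟩
  rw [reflectedSine.eigen_eq_left_iff hn, reflectedSine.eigen_eq_right_iff hn hs2,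
    and_self, div_eq_iff hsin]

/-- Eigenstates of the reduced glued-trees Hamiltonian on sites `1,…,2n` (convention
`ψ_0 = ψ_{2n+1} = 0`): the ansatz `ψ_j = sin(pj)` for `j ≤ n`, `ψ_j = s·sin(p(2n+1−j))`
for `j ≥ n+1` (`s = ±1`) satisfies the eigenvalue equation with eigenvalue `2 cos p` at
all sites `j ∉ {n, n+1}`, and the equations at sites `n` and `n+1` (where the matrix
element is `√2`) hold if and only if `sin((n+1)p)/sin(np) = s√2`. -/
theorem reduced_hamiltonian_eigenstates (n : ℕ) (hn : 1 ≤ n) (p : ℝ)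
    (hp : 0 < p) (hp' : p < Real.pi) (s : ℝ) (hs : s = 1 ∨ s = -1)
    (hsin : Real.sin ((n : ℝ) * p) ≠ 0)
    (ψ : ℕ → ℝ)
    (hψ : ∀ j, ψ j = if j ≤ n then Real.sin (p * j)
      else s * Real.sin (p * ((2 * n + 1 - j : ℕ) : ℝ))) :
    (∀ j, 1 ≤ j → j ≤ 2 * n → j ≠ n → j ≠ n + 1 →
        ψ (j - 1) + ψ (j + 1) = 2 * Real.cos p * ψ j)
    ∧ ((ψ (n - 1) + Real.sqrt 2 * ψ (n + 1) = 2 * Real.cos p * ψ n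
          ∧ Real.sqrt 2 * ψ n + ψ (n + 2) = 2 * Real.cos p * ψ (n + 1))
        ↔ Real.sin (((n : ℝ) + 1) * p) / Real.sin ((n : ℝ) * p) = s * Real.sqrt 2) :=
  reduced_hamiltonian_eigenstates_general n hn p s hs hsin ψ hψ
end

section
/- For the glued-trees graph G_n' (two balanced binary trees of height n joined by a cycle alternating between the leaves), the column subspace spanned by the normalized uniform superpositions |col j⟩ = (1/√N_j) Σ_{a ∈ column j} |a⟩ (where N_j = 2^j for 0 ≤ j ≤ n and N_j = 2^{2n+1−j} for n+1 ≤ j ≤ 2n+1) is invariant under the adjacency matrix A of G_n'. Moreover ⟨col j| A |col(j+1)⟩ = √2 for 0 ≤ j ≤ n−1 and n+1 ≤ j ≤ 2n, and ⟨col n| A |col(n+1)⟩ = 2. -/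
/-!
A 0-1 matrix maps the indicator of column `j` to the function `u ↦ #(neighbours of u in column j)`,
and in `G_n'` this count depends only on the column of `u`. So `A |col j⟩` is a function of the
column, hence a combination of the `|col k⟩`. Pairing it with `|col j⟩` gives
`N_j d_j / √(N_j N_{j+1})` with `d_j` the number of forward neighbours: inside the trees `d_j = 2`
while `N` doubles, or `d_j = 1` while `N` halves, giving `√2`; in the middle `d_n = 2` and
`N_n = N_{n+1}`, giving `2`.
-/

open Finset Matrix

section ColumnVectors

variable {V : Type*} [Fintype V] (col : V → ℕ)

lemma mulVec_column_indicator {A : Matrix V V ℝ} (h01 : ∀ u w, A u w = 0 ∨ A u w = 1)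
    {j : ℕ} {d : ℕ → ℕ} (hd : ∀ u, #{w | col w = j ∧ A u w = 1} = d (col u)) (c : ℝ) :
    (A *ᵥ fun w => if col w = j then c else 0) = fun u => d (col u) * c := by
  funext u
  have hterm : ∀ w, A u w * (if col w = j then c else 0)
      = if col w = j ∧ A u w = 1 then c else 0 := by
    intro w
    rcases h01 u w with h | h <;> by_cases hw : col w = j <;> simp [h, hw]
  simp only [mulVec, dotProduct, hterm, ← sum_filter, sum_const, nsmul_eq_mul, hd]

lemma column_indicator_dotProduct (j : ℕ) (c : ℝ) (g : ℕ → ℝ) :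
    (fun u => if col u = j then c else 0) ⬝ᵥ (fun u => g (col u))
      = #{u | col u = j} * (c * g j) := by
  have hterm : ∀ u, (if col u = j then c else 0) * g (col u)
      = if col u = j then c * g j else 0 := by
    intro u
    split_ifs with hu <;> simp [hu]
  simp only [dotProduct, hterm, ← sum_filter, sum_const, nsmul_eq_mul]

lemma normalized_column_indicator_dotProduct_mulVec {A : Matrix V V ℝ}
    (h01 : ∀ u w, A u w = 0 ∨ A u w = 1) {j k a b : ℕ} {d : ℕ → ℕ}
    (hd : ∀ u, #{w | col w = k ∧ A u w = 1} = d (col u)) (ha : #{u | col u = j} = a) :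
    (fun u => if col u = j then 1 / √(a : ℝ) else 0) ⬝ᵥ
        (A *ᵥ fun u => if col u = k then 1 / √(b : ℝ) else 0)
      = d j * (√(a : ℝ) / √(b : ℝ)) := by
  rw [mulVec_column_indicator col h01 hd,
    column_indicator_dotProduct col j _ fun i => (d i : ℝ) * (1 / √(b : ℝ)), ha]
  conv_rhs => rw [← Real.div_sqrt]
  ring

lemma comp_mem_span_column_indicators {s : ℕ → ℝ} (hs : ∀ j, s j ≠ 0) (g : ℕ → ℝ) :
    (fun u => g (col u)) ∈
      Submodule.span ℝ (Set.range fun j u => if col u = j then s j else 0) := by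
  have hsum : (fun u => g (col u))
      = ∑ j ∈ univ.image col, (g j / s j) • fun u => if col u = j then s j else 0 := by
    funext u
    rw [Finset.sum_apply, sum_eq_single_of_mem (col u) (mem_image_of_mem col (mem_univ u))]
    · simp [hs (col u)]
    · intro j _ hj
      simp [Ne.symm hj]
  rw [hsum]
  exact Submodule.sum_mem _ fun j _ => Submodule.smul_mem _ _ (Submodule.subset_span ⟨j, rfl⟩)

end ColumnVectors

lemma two_mul_sqrt_div_sqrt_two_mul {x : ℝ} (hx : 0 < x) : 2 * (√x / √(2 * x)) = √2 := by
  rw [Real.sqrt_mul zero_le_two, div_mul_cancel_right₀ (Real.sqrt_pos.2 hx).ne', ← div_eq_mul_inv,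
    Real.div_sqrt]

lemma sqrt_two_mul_div_sqrt {x : ℝ} (hx : 0 < x) : √(2 * x) / √x = √2 := by
  rw [Real.sqrt_mul zero_le_two, mul_div_cancel_right₀ _ (Real.sqrt_pos.2 hx).ne']

namespace GluedTrees

variable {n j : ℕ}

def columnSize (n j : ℕ) : ℕ :=
  if j ≤ n then 2 ^ j else 2 ^ (2 * n + 1 - j)

/-- The number of neighbours in column `j` of a vertex in column `k`. -/
def degree (n k j : ℕ) : ℕ :=
  if j = k + 1 then (if k ≤ n then 2 else if k ≤ 2 * n then 1 else 0)
  else if k = j + 1 then (if k ≤ n then 1 else 2)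
  else 0

lemma columnSize_pos (n j : ℕ) : 0 < columnSize n j := by
  unfold columnSize
  split_ifs <;> positivity

lemma columnSize_succ_of_lt (hj : j < n) :
    columnSize n (j + 1) = 2 * columnSize n j := by
  rw [columnSize, columnSize, if_pos (Nat.succ_le_of_lt hj), if_pos hj.le, pow_succ']

lemma columnSize_of_lt_of_le (h₁ : n < j) (h₂ : j ≤ 2 * n) :
    columnSize n j = 2 * columnSize n (j + 1) := by
  rw [columnSize, columnSize, if_neg h₁.not_ge, if_neg (by omega), ← pow_succ',
    show 2 * n + 1 - j = 2 * n + 1 - (j + 1) + 1 by omega]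

lemma columnSize_succ_self (n : ℕ) :
    columnSize n (n + 1) = columnSize n n := by
  rw [columnSize, columnSize, if_neg (by omega), if_pos le_rfl,
    show 2 * n + 1 - (n + 1) = n by omega]

lemma degree_succ_of_le (hj : j ≤ n) : degree n j (j + 1) = 2 := by
  rw [degree, if_pos rfl, if_pos hj]

lemma degree_succ_of_lt_of_le (h₁ : n < j) (h₂ : j ≤ 2 * n) :
    degree n j (j + 1) = 1 := by
  rw [degree, if_pos rfl, if_neg h₁.not_ge, if_pos h₂]

lemma card_neighbors_in_column_eq_degree {V : Type*} [Fintype V] (A : Matrix V V ℝ)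
    (col : V → ℕ) (hcol : ∀ u, col u ≤ 2 * n + 1)
    (hadj : ∀ u w, A u w = 1 → col w = col u + 1 ∨ col u = col w + 1)
    (hfwd2 : ∀ u, col u ≤ n → #{w | col w = col u + 1 ∧ A u w = 1} = 2)
    (hfwd1 : ∀ u, n + 1 ≤ col u → col u ≤ 2 * n → #{w | col w = col u + 1 ∧ A u w = 1} = 1)
    (hbwd1 : ∀ u, 1 ≤ col u → col u ≤ n → #{w | col w + 1 = col u ∧ A u w = 1} = 1)
    (hbwd2 : ∀ u, n + 1 ≤ col u → col u ≤ 2 * n + 1 → #{w | col w + 1 = col u ∧ A u w = 1} = 2)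
    (u : V) : #{w | col w = j ∧ A u w = 1} = degree n (col u) j := by
  unfold degree
  split_ifs with hfwd hleft hmid hbwd hbleft
  · subst hfwd; exact hfwd2 u hleft
  · subst hfwd; exact hfwd1 u (by omega) hmid
  · rw [card_eq_zero, filter_eq_empty_iff]
    rintro w - ⟨rfl, -⟩
    have := hcol w
    omega
  · rw [← hbwd1 u (by omega) hbleft]
    exact congrArg card (filter_congr fun w _ => and_congr_left fun _ => by omega)
  · rw [← hbwd2 u (by omega) (hcol u)]
    exact congrArg card (filter_congr fun w _ => and_congr_left fun _ => by omega)
  · rw [card_eq_zero, filter_eq_empty_iff]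
    rintro w - ⟨rfl, hA⟩
    rcases hadj u w hA with h | h <;> omega

end GluedTrees

theorem column_subspace_invariant_general (n : ℕ)
    (V : Type*) [Fintype V]
    (A : Matrix V V ℝ) (col : V → ℕ)
    (Nsz : ℕ → ℕ) (hNsz : ∀ j, Nsz j = if j ≤ n then 2 ^ j else 2 ^ (2 * n + 1 - j))
    (colvec : ℕ → V → ℝ)
    (hcolvec : ∀ j u, colvec j u = if col u = j then 1 / Real.sqrt (Nsz j) else 0)
    (hcol : ∀ u, col u ≤ 2 * n + 1)
    (h01 : ∀ u w, A u w = 0 ∨ A u w = 1)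
    (hadj : ∀ u w, A u w = 1 → col w = col u + 1 ∨ col u = col w + 1)
    (hcard : ∀ j, j ≤ 2 * n + 1 → (Finset.univ.filter fun u => col u = j).card = Nsz j)
    (hfwd2 : ∀ u, col u ≤ n →
      (Finset.univ.filter fun w => col w = col u + 1 ∧ A u w = 1).card = 2)
    (hfwd1 : ∀ u, n + 1 ≤ col u → col u ≤ 2 * n →
      (Finset.univ.filter fun w => col w = col u + 1 ∧ A u w = 1).card = 1)
    (hbwd1 : ∀ u, 1 ≤ col u → col u ≤ n →
      (Finset.univ.filter fun w => col w + 1 = col u ∧ A u w = 1).card = 1)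
    (hbwd2 : ∀ u, n + 1 ≤ col u → col u ≤ 2 * n + 1 →
      (Finset.univ.filter fun w => col w + 1 = col u ∧ A u w = 1).card = 2) :
    (∀ j, A.mulVec (colvec j) ∈ Submodule.span ℝ (Set.range colvec))
    ∧ (∀ j, j + 1 ≤ n ∨ (n + 1 ≤ j ∧ j ≤ 2 * n) →
        dotProduct (colvec j) (A.mulVec (colvec (j + 1))) = Real.sqrt 2)
    ∧ dotProduct (colvec n) (A.mulVec (colvec (n + 1))) = 2 := by
  have hNsz' : Nsz = GluedTrees.columnSize n := funext hNsz
  have hcolvec' : colvec = fun j u => if col u = j then 1 / √(Nsz j) else 0 := funext₂ hcolvec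
  have hdeg (j : ℕ) := GluedTrees.card_neighbors_in_column_eq_degree (j := j) A col hcol hadj
    hfwd2 hfwd1 hbwd1 hbwd2
  have hpos (j : ℕ) : (0 : ℝ) < GluedTrees.columnSize n j :=
    Nat.cast_pos.2 (GluedTrees.columnSize_pos n j)
  have hdot {j : ℕ} (hj : j ≤ 2 * n) :
      colvec j ⬝ᵥ A *ᵥ colvec (j + 1)
        = GluedTrees.degree n j (j + 1) * (√(Nsz j) / √(Nsz (j + 1))) := by
    rw [hcolvec']
    exact normalized_column_indicator_dotProduct_mulVec col h01
      (d := (GluedTrees.degree n · (j + 1))) (hdeg (j + 1)) (hcard j (by omega))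
  refine ⟨fun j => ?_, ?_, ?_⟩
  · rw [hcolvec', mulVec_column_indicator col h01 (d := (GluedTrees.degree n · j)) (hdeg j)]
    refine comp_mem_span_column_indicators col (s := fun k => 1 / √(Nsz k)) (fun k => ?_)
      fun k => GluedTrees.degree n k j * (1 / √(Nsz j))
    rw [hNsz']
    exact one_div_ne_zero (Real.sqrt_pos.2 (hpos k)).ne'
  · rintro j (hj | ⟨hj, hj'⟩)
    · rw [hdot (by omega), GluedTrees.degree_succ_of_le (by omega), hNsz',
        GluedTrees.columnSize_succ_of_lt hj]
      push_cast
      exact two_mul_sqrt_div_sqrt_two_mul (hpos j)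
    · rw [hdot hj', GluedTrees.degree_succ_of_lt_of_le hj hj', hNsz',
        GluedTrees.columnSize_of_lt_of_le hj hj']
      push_cast
      rw [one_mul, sqrt_two_mul_div_sqrt (hpos (j + 1))]
  · rw [hdot (by omega), GluedTrees.degree_succ_of_le le_rfl, hNsz',
      GluedTrees.columnSize_succ_self, div_self (Real.sqrt_pos.2 (hpos n)).ne', Nat.cast_ofNat,
      mul_one]

/-- The column subspace of the glued-trees graph `G_n'` is invariant under the
adjacency matrix `A`, and the reduced matrix elements are
`⟨col j|A|col(j+1)⟩ = √2` for `0 ≤ j ≤ n−1` and `n+1 ≤ j ≤ 2n`, and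
`⟨col n|A|col(n+1)⟩ = 2`.  The graph structure is encoded by the column function
`col`, the column sizes `Nsz j` (`2^j` on the left, `2^{2n+1−j}` on the right), and
the forward/backward degree conditions between adjacent columns. -/
theorem column_subspace_invariant (n : ℕ) (hn : 1 ≤ n)
    (V : Type*) [Fintype V]
    (A : Matrix V V ℝ) (col : V → ℕ)
    (Nsz : ℕ → ℕ) (hNsz : ∀ j, Nsz j = if j ≤ n then 2 ^ j else 2 ^ (2 * n + 1 - j))
    (colvec : ℕ → V → ℝ)
    (hcolvec : ∀ j u, colvec j u = if col u = j then 1 / Real.sqrt (Nsz j) else 0)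
    (hcol : ∀ u, col u ≤ 2 * n + 1)
    (hsym : A.IsSymm)
    (h01 : ∀ u w, A u w = 0 ∨ A u w = 1)
    (hadj : ∀ u w, A u w = 1 → col w = col u + 1 ∨ col u = col w + 1)
    (hcard : ∀ j, j ≤ 2 * n + 1 → (Finset.univ.filter fun u => col u = j).card = Nsz j)
    (hfwd2 : ∀ u, col u ≤ n →
      (Finset.univ.filter fun w => col w = col u + 1 ∧ A u w = 1).card = 2)
    (hfwd1 : ∀ u, n + 1 ≤ col u → col u ≤ 2 * n →
      (Finset.univ.filter fun w => col w = col u + 1 ∧ A u w = 1).card = 1)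
    (hbwd1 : ∀ u, 1 ≤ col u → col u ≤ n →
      (Finset.univ.filter fun w => col w + 1 = col u ∧ A u w = 1).card = 1)
    (hbwd2 : ∀ u, n + 1 ≤ col u → col u ≤ 2 * n + 1 →
      (Finset.univ.filter fun w => col w + 1 = col u ∧ A u w = 1).card = 2) :
    (∀ j, A.mulVec (colvec j) ∈ Submodule.span ℝ (Set.range colvec))
    ∧ (∀ j, j + 1 ≤ n ∨ (n + 1 ≤ j ∧ j ≤ 2 * n) →
        dotProduct (colvec j) (A.mulVec (colvec (j + 1))) = Real.sqrt 2)
    ∧ dotProduct (colvec n) (A.mulVec (colvec (n + 1))) = 2 :=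
  column_subspace_invariant_general n V A col Nsz hNsz colvec hcolvec hcol h01 hadj hcard hfwd2
    hfwd1 hbwd1 hbwd2
end
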